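/- Let A = (Q, Σ, q₀, Δ) be a WFA and let Â be its baseline-augmented subset construction. Then A is determinizable if and only if Â is determinizable. -/

import Mathlib

open scoped Classical

/-- `ℤ∞ = ℤ ∪ {∞}`. -/
abbrev ZInf : Type := WithTop ℤ

/-- `mwt Δ w p q` is the minimal weight of a run of the WFA with transition weights `Δ`
on the word `w` from state `p` to state `q` (`⊤` if there is no such run). -/
noncomputable def mwt {Q A : Type*} [Fintype Q] (Δ : Q → A → Q → ZInf) :
    List A → Q → Q → ZInf
  | [], p, q => if p = q then 0 else ⊤
  | σ :: w, p, q => Finset.univ.inf fun t => Δ p σ t + mwt Δ w t q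

/-- `wtW Δ q₀ w = mwt(w, q₀ → Q)`: the value that the WFA `(Δ, q₀)` assigns to the
word `w`. -/
noncomputable def wtW {Q A : Type*} [Fintype Q] (Δ : Q → A → Q → ZInf) (q₀ : Q)
    (w : List A) : ZInf :=
  Finset.univ.inf fun q => mwt Δ w q₀ q

/-- A WFA is deterministic if from every state, on every letter, at most one transition has
finite weight. -/
def IsDet {Q A : Type*} (Δ : Q → A → Q → ZInf) : Prop :=
  ∀ p σ q q', Δ p σ q ≠ ⊤ → Δ p σ q' ≠ ⊤ → q = q'

/-- A WFA is determinizable if there is a deterministic WFA over the same alphabet that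
computes the same function on words. -/
def Determinizable {Q A : Type*} [Fintype Q] (Δ : Q → A → Q → ZInf) (q₀ : Q) : Prop :=
  ∃ (Q' : Type) (inst : Fintype Q') (Δ' : Q' → A → Q' → ZInf) (q₀' : Q'),
    IsDet Δ' ∧ ∀ w : List A, @wtW Q' A inst Δ' q₀' w = wtW Δ q₀ w

/-- `δ_B(T, σ)`: the set of states reachable from the set `T` by a finite-weight transition
on the letter `σ`. -/
noncomputable def deltaB {Q A : Type*} [Fintype Q] (Δ : Q → A → Q → ZInf) (T : Finset Q)
    (σ : A) : Finset Q :=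
  Finset.univ.filter fun q => ∃ p ∈ T, Δ p σ q ≠ ⊤

/-- States of the baseline-augmented subset construction: triples `(q, p, T)` with
`q, p ∈ T`, where `q` is the inner state, `p` the baseline component and `T` the reachable
subset. -/
abbrev AugState (Q : Type*) : Type _ := {x : Q × Q × Finset Q // x.1 ∈ x.2.2 ∧ x.2.1 ∈ x.2.2}

/-- Transition weights of the baseline-augmented subset construction `Â`. Its alphabet
consists of the transitions `(q₁, σ, q₂)` of `A` (whose weight `c = Δ q₁ σ q₂` is
determined); from `(p₁, q₁, T₁)` reading `(q₁, σ, q₂)` with `c < ∞`, if `T₂ = δ_B(T₁, σ)`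
and `(p₁, σ, c', p₂) ∈ Δ` with `c' < ∞`, there is a transition to `(p₂, q₂, T₂)` of weight
`c' − c`; all remaining transitions have weight `∞`. -/
noncomputable def augDelta {Q A : Type*} [Fintype Q] (Δ : Q → A → Q → ZInf) :
    AugState Q → Q × A × Q → AugState Q → ZInf := fun s l t =>
  if Δ l.1 l.2.1 l.2.2 ≠ ⊤ ∧ s.1.2.1 = l.1 ∧ t.1.2.1 = l.2.2 ∧
      t.1.2.2 = deltaB Δ s.1.2.2 l.2.1 ∧ Δ s.1.1 l.2.1 t.1.1 ≠ ⊤ then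
    ((WithTop.untopD 0 (Δ s.1.1 l.2.1 t.1.1) -
        WithTop.untopD 0 (Δ l.1 l.2.1 l.2.2) : ℤ) : ZInf)
  else ⊤

/-- The initial state `(q₀, q₀, {q₀})` of `Â`. -/
def augInit {Q : Type*} [DecidableEq Q] (q₀ : Q) : AugState Q :=
  ⟨(q₀, q₀, {q₀}), Finset.mem_singleton_self q₀, Finset.mem_singleton_self q₀⟩


set_option linter.unusedSectionVars false
set_option maxHeartbeats 1000000

section Infra
variable {ι κ : Type*} [Fintype ι] [Fintype κ]

lemma inf_add_right (s : Finset ι) (f : ι → ZInf) (a : ZInf) :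
    s.inf f + a = s.inf fun i => f i + a := by
  induction s using Finset.cons_induction with
  | empty => simp
  | cons i s hi ih => rw [Finset.inf_cons, Finset.inf_cons, ← ih,
      min_add_add_right]

lemma inf_add_left (s : Finset ι) (f : ι → ZInf) (a : ZInf) :
    a + s.inf f = s.inf fun i => a + f i := by
  rw [add_comm, inf_add_right]; simp_rw [add_comm]

lemma inf_swap (f : ι → κ → ZInf) :
    (Finset.univ.inf fun i => Finset.univ.inf fun k => f i k)
      = Finset.univ.inf fun k => Finset.univ.inf fun i => f i k := by
  apply le_antisymm <;>
  · refine Finset.le_inf fun k _ => Finset.le_inf fun i _ => ?_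
    exact le_trans (Finset.inf_le (Finset.mem_univ _))
      (le_trans (Finset.inf_le (Finset.mem_univ _)) le_rfl)

/-- inf of a function which is `⊤` away from `j`. -/
lemma inf_eq_of_unique (f : ι → ZInf) (j : ι) (h : ∀ i, i ≠ j → f i = ⊤) :
    Finset.univ.inf f = f j := by
  refine le_antisymm (Finset.inf_le (Finset.mem_univ _)) (Finset.le_inf fun i _ => ?_)
  by_cases hij : i = j
  · exact hij ▸ le_rfl
  · simp [h i hij]

variable {Q A : Type*} [Fintype Q] {Δ : Q → A → Q → ZInf}

lemma mwt_nil (p q : Q) : mwt Δ [] p q = if p = q then 0 else ⊤ := rfl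
lemma mwt_cons (σ : A) (w : List A) (p q : Q) :
    mwt Δ (σ :: w) p q = Finset.univ.inf fun t => Δ p σ t + mwt Δ w t q := rfl

lemma wtW_nil (q₀ : Q) : wtW Δ q₀ [] = 0 := by
  rw [wtW]
  rw [inf_eq_of_unique _ q₀ (fun i hi => by simp [mwt_nil, (Ne.symm hi)])]
  simp [mwt_nil]

lemma wtW_cons (q₀ : Q) (σ : A) (w : List A) :
    wtW Δ q₀ (σ :: w) = Finset.univ.inf fun t => Δ q₀ σ t + wtW Δ t w := by
  rw [wtW]
  simp_rw [mwt_cons]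
  rw [inf_swap]
  congr 1; ext t
  rw [wtW, inf_add_left]

lemma mwt_append (w₁ w₂ : List A) (p r : Q) :
    mwt Δ (w₁ ++ w₂) p r = Finset.univ.inf fun q => mwt Δ w₁ p q + mwt Δ w₂ q r := by
  induction w₁ generalizing p with
  | nil =>
    simp only [List.nil_append]
    rw [inf_eq_of_unique _ p (fun i hi => by simp [mwt_nil, (Ne.symm hi)])]
    simp [mwt_nil]
  | cons σ w₁ ih =>
    rw [List.cons_append, mwt_cons]
    simp_rw [ih, inf_add_left]
    rw [inf_swap]
    simp_rw [mwt_cons, inf_add_right]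
    congr 1; ext q; congr 1; ext t
    rw [add_assoc]

lemma mwt_snoc (w : List A) (σ : A) (p r : Q) :
    mwt Δ (w ++ [σ]) p r = Finset.univ.inf fun q => mwt Δ w p q + Δ q σ r := by
  rw [mwt_append]
  congr 1; ext q
  congr 1
  rw [mwt_cons, inf_eq_of_unique _ r (fun i hi => by simp [mwt_nil, hi])]
  simp [mwt_nil]

lemma inf_ne_top {f : ι → ZInf} (h : Finset.univ.inf f ≠ ⊤) : ∃ i, f i ≠ ⊤ := by
  by_contra hc
  push_neg at hc
  exact h ((Finset.inf_eq_top_iff f _).2 fun i _ => hc i)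

lemma mwt_cons_ne_top {σ : A} {w : List A} {p q : Q} (h : mwt Δ (σ :: w) p q ≠ ⊤) :
    ∃ t, Δ p σ t ≠ ⊤ ∧ mwt Δ w t q ≠ ⊤ := by
  rw [mwt_cons] at h
  obtain ⟨t, ht⟩ := inf_ne_top h
  exact ⟨t, by simpa [WithTop.add_eq_top, not_or] using ht⟩

lemma det_mwt_unique (hdet : IsDet Δ) (w : List A) (p : Q) :
    ∀ q q', mwt Δ w p q ≠ ⊤ → mwt Δ w p q' ≠ ⊤ → q = q' := by
  induction w generalizing p with
  | nil => intro q q' h h'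
           simp only [mwt_nil, ne_eq, ite_eq_right_iff, not_forall] at h h'
           exact h.1 ▸ h'.1
  | cons σ w ih =>
    intro q q' h h'
    obtain ⟨t, ht1, ht2⟩ := mwt_cons_ne_top h
    obtain ⟨t', ht1', ht2'⟩ := mwt_cons_ne_top h'
    have := hdet p σ t t' ht1 ht1'
    subst this
    exact ih t q q' ht2 ht2'

lemma det_wtW_eq_mwt (hdet : IsDet Δ) {w : List A} {p q : Q} (h : mwt Δ w p q ≠ ⊤) :
    wtW Δ p w = mwt Δ w p q := by
  rw [wtW]
  refine inf_eq_of_unique _ q fun i hi => ?_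
  by_contra hc
  exact hi (det_mwt_unique hdet w p i q hc h)

end Infra

section Defs
variable {Q A : Type*} [Fintype Q]

/-- projection of a transition word to a word -/
def proj {Q A : Type*} (wh : List (Q × A × Q)) : List A := wh.map (·.2.1)

/-- total cost of a transition word -/
def cst {Q A : Type*} (Δ : Q → A → Q → ZInf) (wh : List (Q × A × Q)) : ℤ :=
  (wh.map fun l => (Δ l.1 l.2.1 l.2.2).untopD 0).sum

/-- end state of a transition word started at q -/
def endAt {Q A : Type*} : Q → List (Q × A × Q) → Q
  | q, [] => q
  | _, l :: r => endAt l.2.2 r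

/-- a transition word is a valid run from q -/
def Valid {Q A : Type*} (Δ : Q → A → Q → ZInf) : Q → List (Q × A × Q) → Prop
  | _, [] => True
  | q, l :: r => l.1 = q ∧ Δ l.1 l.2.1 l.2.2 ≠ ⊤ ∧ Valid Δ l.2.2 r

variable (Δ : Q → A → Q → ZInf)

@[simp] lemma proj_nil : proj ([] : List (Q × A × Q)) = [] := rfl
@[simp] lemma proj_cons (l : Q × A × Q) (r) : proj (l :: r) = l.2.1 :: proj r := rfl
@[simp] lemma proj_append (a b : List (Q × A × Q)) : proj (a ++ b) = proj a ++ proj b :=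
  List.map_append
@[simp] lemma cst_nil : cst Δ [] = 0 := rfl
@[simp] lemma cst_cons (l : Q × A × Q) (r) :
    cst Δ (l :: r) = (Δ l.1 l.2.1 l.2.2).untopD 0 + cst Δ r := rfl
@[simp] lemma cst_append (a b : List (Q × A × Q)) : cst Δ (a ++ b) = cst Δ a + cst Δ b := by
  simp [cst]
@[simp] lemma endAt_nil (q : Q) : endAt q ([] : List (Q × A × Q)) = q := rfl
@[simp] lemma endAt_cons (q : Q) (l : Q × A × Q) (r) :
    endAt q (l :: r) = endAt l.2.2 r := rfl
@[simp] lemma endAt_append (q : Q) (a b : List (Q × A × Q)) :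
    endAt q (a ++ b) = endAt (endAt q a) b := by
  induction a generalizing q with
  | nil => rfl
  | cons l r ih => simp [ih]
@[simp] lemma valid_nil (q : Q) : Valid Δ q [] := trivial
lemma valid_cons (q : Q) (l : Q × A × Q) (r) :
    Valid Δ q (l :: r) ↔ l.1 = q ∧ Δ l.1 l.2.1 l.2.2 ≠ ⊤ ∧ Valid Δ l.2.2 r := Iff.rfl
lemma valid_append (q : Q) (a b : List (Q × A × Q)) :
    Valid Δ q (a ++ b) ↔ Valid Δ q a ∧ Valid Δ (endAt q a) b := by
  induction a generalizing q with
  | nil => simp [valid_nil]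
  | cons l r ih => simp [valid_cons, ih, and_assoc]

end Defs

section Runs
variable {Q A : Type*} [Fintype Q] {Δ : Q → A → Q → ZInf}

lemma zinf_coe_untop' {x : ZInf} (h : x ≠ ⊤) : ((x.untopD 0 : ℤ) : ZInf) = x := by
  lift x to ℤ using h
  simp

lemma zinf_arith (a c e : ℤ) (X : ZInf) :
    ((a - c : ℤ) : ZInf) + (X + ((-e : ℤ) : ZInf)) =
      ((a : ℤ) : ZInf) + X + ((-(c + e) : ℤ) : ZInf) := by
  rw [sub_eq_add_neg, neg_add, WithTop.coe_add, WithTop.coe_add]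
  abel

lemma valid_mwt_ne_top {p : Q} {wh : List (Q × A × Q)} (h : Valid Δ p wh) :
    mwt Δ (proj wh) p (endAt p wh) ≠ ⊤ := by
  induction wh generalizing p with
  | nil => simp [mwt_nil]
  | cons l r ih =>
    obtain ⟨h1, h2, h3⟩ := h
    subst h1
    rw [proj_cons, endAt_cons, mwt_cons]
    refine ne_top_of_le_ne_top ?_ (Finset.inf_le (Finset.mem_univ l.2.2))
    simp [WithTop.add_eq_top, h2, ih h3]

lemma mwt_ne_top_exists {w : List A} {p r : Q} (h : mwt Δ w p r ≠ ⊤) :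
    ∃ wh, proj wh = w ∧ Valid Δ p wh ∧ endAt p wh = r := by
  induction w generalizing p with
  | nil =>
    rw [mwt_nil] at h
    refine ⟨[], rfl, trivial, ?_⟩
    by_contra hc
    rw [endAt_nil] at hc
    exact h (if_neg hc)
  | cons σ w ih =>
    obtain ⟨t, ht1, ht2⟩ := mwt_cons_ne_top h
    obtain ⟨wh, hp, hv, he⟩ := ih ht2
    exact ⟨(p, σ, t) :: wh, by simp [hp], ⟨rfl, ht1, hv⟩, by simpa using he⟩

end Runs

section AugLemma
variable {Q A : Type*} [Fintype Q] [DecidableEq Q] (Δ : Q → A → Q → ZInf)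

lemma augWt (wh : List (Q × A × Q)) (s : AugState Q) :
    wtW (augDelta Δ) s wh =
      if Valid Δ s.1.2.1 wh then wtW Δ s.1.1 (proj wh) + ((-cst Δ wh : ℤ) : ZInf)
      else ⊤ := by
  induction wh generalizing s with
  | nil => simp [wtW_nil]
  | cons l r ih =>
    rw [wtW_cons]
    by_cases hv : Valid Δ s.1.2.1 (l :: r)
    · rw [if_pos hv]
      obtain ⟨h1, h2, h3⟩ := hv
      rw [proj_cons, wtW_cons, inf_add_right]
      apply le_antisymm
      · refine Finset.le_inf fun t₂ _ => ?_
        by_cases hfin : Δ s.1.1 l.2.1 t₂ = ⊤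
        · simp [hfin]
        · have m1 : t₂ ∈ deltaB Δ s.1.2.2 l.2.1 := by
            simp only [deltaB, Finset.mem_filter, Finset.mem_univ, true_and]
            exact ⟨s.1.1, s.2.1, hfin⟩
          have m2 : l.2.2 ∈ deltaB Δ s.1.2.2 l.2.1 := by
            simp only [deltaB, Finset.mem_filter, Finset.mem_univ, true_and]
            exact ⟨s.1.2.1, s.2.2, h1 ▸ h2⟩
          refine le_trans
            (Finset.inf_le (Finset.mem_univ
              (⟨(t₂, l.2.2, deltaB Δ s.1.2.2 l.2.1), m1, m2⟩ : AugState Q))) ?_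
          rw [ih]
          rw [if_pos (show Valid Δ l.2.2 r from h3)]
          have hd : augDelta Δ s l
              (⟨(t₂, l.2.2, deltaB Δ s.1.2.2 l.2.1), m1, m2⟩ : AugState Q) =
              (((Δ s.1.1 l.2.1 t₂).untopD 0 - (Δ l.1 l.2.1 l.2.2).untopD 0 : ℤ) : ZInf) := by
            rw [augDelta, if_pos]
            exact ⟨h2, h1.symm, rfl, rfl, hfin⟩
          rw [hd, cst_cons]
          nth_rewrite 2 [← zinf_coe_untop' hfin]
          exact le_of_eq (zinf_arith _ _ _ _)
      · refine Finset.le_inf fun t _ => ?_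
        rw [augDelta]
        split_ifs with hc
        · obtain ⟨hc1, hc2, hc3, hc4, hc5⟩ := hc
          rw [ih, if_pos (show Valid Δ t.1.2.1 r from hc3 ▸ h3)]
          refine le_trans (Finset.inf_le (Finset.mem_univ t.1.1)) (le_of_eq ?_)
          rw [cst_cons]
          nth_rewrite 1 [← zinf_coe_untop' hc5]
          exact (zinf_arith _ _ _ _).symm
        · rw [top_add]
          exact le_top
    · rw [if_neg hv]
      rw [Finset.inf_eq_top_iff]
      intro t _
      rw [augDelta]
      split_ifs with hc
      · obtain ⟨hc1, hc2, hc3, hc4, hc5⟩ := hc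
        rw [ih, if_neg ?_, add_top]
        rw [hc3]
        intro hvr
        exact hv ⟨hc2.symm, hc1, hvr⟩
      · rw [top_add]

end AugLemma

section Prod
variable {Q A P : Type*} [Fintype Q] [Fintype P] (Δ : Q → A → Q → ZInf)
  (ΔD : P → A → P → ZInf)

lemma zinf_arith2 (c e : ℤ) (b X : ZInf) :
    b + ((-c : ℤ) : ZInf) + (X + ((-e : ℤ) : ZInf)) = b + X + ((-(c + e) : ℤ) : ZInf) := by
  rw [neg_add, WithTop.coe_add]
  abel

noncomputable def prodDelta : P × Q → Q × A × Q → P × Q → ZInf := fun s l t =>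
  if s.2 = l.1 ∧ t.2 = l.2.2 ∧ Δ l.1 l.2.1 l.2.2 ≠ ⊤ then
    ΔD s.1 l.2.1 t.1 + ((-(Δ l.1 l.2.1 l.2.2).untopD 0 : ℤ) : ZInf)
  else ⊤

lemma prodDelta_det (h : IsDet ΔD) : IsDet (prodDelta Δ ΔD) := by
  intro p l t t' ht ht'
  rw [prodDelta] at ht ht'
  split_ifs at ht ht' with h1 h2 h3 h4
  all_goals try exact absurd rfl (by first | exact ht | exact ht')
  · obtain ⟨-, he, -⟩ := h1
    obtain ⟨-, he', -⟩ := h2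
    rw [WithTop.add_ne_top] at ht ht'
    have := h p.1 l.2.1 t.1 t'.1 ht.1 ht'.1
    exact Prod.ext this (he.trans he'.symm)

lemma prodWt (wh : List (Q × A × Q)) (s : P × Q) :
    wtW (prodDelta Δ ΔD) s wh =
      if Valid Δ s.2 wh then wtW ΔD s.1 (proj wh) + ((-cst Δ wh : ℤ) : ZInf)
      else ⊤ := by
  induction wh generalizing s with
  | nil => simp [wtW_nil]
  | cons l r ih =>
    rw [wtW_cons]
    by_cases hv : Valid Δ s.2 (l :: r)
    · rw [if_pos hv]
      obtain ⟨h1, h2, h3⟩ := hv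
      rw [proj_cons, wtW_cons, inf_add_right]
      apply le_antisymm
      · refine Finset.le_inf fun t₂ _ => ?_
        refine le_trans (Finset.inf_le (Finset.mem_univ ((t₂, l.2.2) : P × Q))) ?_
        rw [ih]
        rw [if_pos (show Valid Δ l.2.2 r from h3)]
        have hd : prodDelta Δ ΔD s l ((t₂, l.2.2) : P × Q) =
            ΔD s.1 l.2.1 t₂ + ((-(Δ l.1 l.2.1 l.2.2).untopD 0 : ℤ) : ZInf) := by
          rw [prodDelta, if_pos]
          exact ⟨h1.symm, rfl, h2⟩
        rw [hd, cst_cons]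
        exact le_of_eq (zinf_arith2 _ _ _ _)
      · refine Finset.le_inf fun t _ => ?_
        rw [prodDelta]
        split_ifs with hc
        · obtain ⟨hc1, hc2, hc3⟩ := hc
          rw [ih, if_pos (show Valid Δ t.2 r from hc2 ▸ h3)]
          refine le_trans (Finset.inf_le (Finset.mem_univ t.1)) (le_of_eq ?_)
          rw [cst_cons]
          exact (zinf_arith2 _ _ _ _).symm
        · rw [top_add]
          exact le_top
    · rw [if_neg hv]
      rw [Finset.inf_eq_top_iff]
      intro t _
      rw [prodDelta]
      split_ifs with hc
      · obtain ⟨hc1, hc2, hc3⟩ := hc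
        rw [ih, if_neg ?_, add_top]
        rw [hc2]
        intro hvr
        exact hv ⟨hc1.symm, hc3, hvr⟩
      · rw [top_add]

end Prod

section Transport
variable {A : Type*}

lemma inf_comp_equiv {ι κ : Type*} [Fintype ι] [Fintype κ] (e : ι ≃ κ) (f : κ → ZInf) :
    (Finset.univ.inf fun i => f (e i)) = Finset.univ.inf f := by
  apply le_antisymm
  · refine Finset.le_inf fun k _ => ?_
    refine le_trans (Finset.inf_le (Finset.mem_univ (e.symm k))) ?_
    simp
  · exact Finset.le_inf fun i _ => Finset.inf_le (Finset.mem_univ (e i))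

lemma mwt_equiv {S T : Type*} [Fintype S] [Fintype T] (e : S ≃ T)
    (Δs : S → A → S → ZInf) (w : List A) (p q : S) :
    mwt (fun i σ j => Δs (e.symm i) σ (e.symm j)) w (e p) (e q) = mwt Δs w p q := by
  induction w generalizing p with
  | nil => simp [mwt_nil, EmbeddingLike.apply_eq_iff_eq]
  | cons σ w ih =>
    rw [mwt_cons, mwt_cons, ← inf_comp_equiv e]
    congr 1
    ext t
    rw [ih t]
    simp

/-- Determinizability follows from a deterministic equivalent automaton in any universe. -/
lemma determinizable_intro {QB : Type*} [Fintype QB] (ΔB : QB → A → QB → ZInf) (qB : QB)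
    {S : Type*} [Fintype S] (Δs : S → A → S → ZInf) (s₀ : S) (hdet : IsDet Δs)
    (h : ∀ w, wtW Δs s₀ w = wtW ΔB qB w) : Determinizable ΔB qB := by
  let e := Fintype.equivFin S
  refine ⟨Fin (Fintype.card S), inferInstance,
    fun i σ j => Δs (e.symm i) σ (e.symm j), e s₀, ?_, ?_⟩
  · intro i σ j j' hj hj'
    have := hdet (e.symm i) σ (e.symm j) (e.symm j') hj hj'
    exact e.symm.injective this
  · intro w
    rw [← h w, wtW, wtW, ← inf_comp_equiv e]
    congr 1
    ext q
    exact mwt_equiv e Δs w s₀ q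

end Transport

section Dir1
variable {Q A : Type*} [Fintype Q] [DecidableEq Q]

lemma dir1 (Δ : Q → A → Q → ZInf) (q₀ : Q) (h : Determinizable Δ q₀) :
    Determinizable (augDelta Δ) (augInit q₀) := by
  obtain ⟨P, instP, ΔD, p₀, hdet, heq⟩ := h
  letI := instP
  refine determinizable_intro (augDelta Δ) (augInit q₀) (prodDelta Δ ΔD) ((p₀, q₀) : P × Q)
    (prodDelta_det Δ ΔD hdet) fun wh => ?_
  rw [prodWt, augWt]
  simp only [augInit]
  split_ifs with h1
  · simp only [h1, ↓reduceIte]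
    exact congrArg (fun x => x + ((-cst Δ wh : ℤ) : ZInf)) (heq (proj wh))
  · simp only [h1, ↓reduceIte]

end Dir1

section Dir2
variable {Q A P : Type*} [Fintype Q] [DecidableEq Q] [Fintype P]
  (Δ : Q → A → Q → ZInf) (ΔH : P → Q × A × Q → P → ZInf)

/-- one-step update of the pair-subset construction -/
noncomputable def upd (S : Finset (Q × P)) (σ : A) : Finset (Q × P) :=
  Finset.univ.filter fun t => ∃ s ∈ S, Δ s.1 σ t.1 ≠ ⊤ ∧ ΔH s.2 (s.1, σ, t.1) t.2 ≠ ⊤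

noncomputable def stepInf (S : Finset (Q × P)) (σ : A) : ZInf :=
  S.inf fun s => Finset.univ.inf fun t : Q × P =>
    if Δ s.1 σ t.1 ≠ ⊤ ∧ ΔH s.2 (s.1, σ, t.1) t.2 ≠ ⊤ then
      ΔH s.2 (s.1, σ, t.1) t.2 + Δ s.1 σ t.1
    else ⊤

noncomputable def newDelta : Finset (Q × P) → A → Finset (Q × P) → ZInf := fun S σ S' =>
  if S' = upd Δ ΔH S σ then stepInf Δ ΔH S σ else ⊤

lemma newDelta_det : IsDet (newDelta Δ ΔH) := by
  intro S σ S₁ S₂ h1 h2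
  rw [newDelta] at h1 h2
  split_ifs at h1 h2 with u1 u2
  · exact u1.trans u2.symm
  all_goals exact absurd rfl (by assumption)

lemma mem_foldl_of_run (wh : List (Q × A × Q)) (S : Finset (Q × P)) (q : Q) (d e : P)
    (hmem : (q, d) ∈ S) (hv : Valid Δ q wh) (hm : mwt ΔH wh d e ≠ ⊤) :
    (endAt q wh, e) ∈ (proj wh).foldl (upd Δ ΔH) S := by
  induction wh generalizing S q d with
  | nil =>
    rw [mwt_nil] at hm
    have : d = e := by
      by_contra hc
      exact hm (if_neg hc)
    simpa [← this] using hmem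
  | cons l r ih =>
    obtain ⟨h1, h2, h3⟩ := hv
    subst h1
    obtain ⟨f, hf1, hf2⟩ := mwt_cons_ne_top hm
    have hmem' : (l.2.2, f) ∈ upd Δ ΔH S l.2.1 := by
      simp only [upd, Finset.mem_filter, Finset.mem_univ, true_and]
      exact ⟨(l.1, d), hmem, h2, by simpa using hf1⟩
    simpa using ih (upd Δ ΔH S l.2.1) l.2.2 f hmem' h3 hf2

lemma foldl_mem_run (w : List A) (S : Finset (Q × P)) (t : Q × P)
    (ht : t ∈ w.foldl (upd Δ ΔH) S) :
    ∃ s ∈ S, ∃ wh, proj wh = w ∧ Valid Δ s.1 wh ∧ endAt s.1 wh = t.1 ∧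
      mwt ΔH wh s.2 t.2 ≠ ⊤ := by
  induction w generalizing S with
  | nil => exact ⟨t, ht, [], rfl, trivial, rfl, by simp [mwt_nil]⟩
  | cons σ w ih =>
    obtain ⟨s', hs', wh, hp, hv, he, hm⟩ := ih (upd Δ ΔH S σ) ht
    simp only [upd, Finset.mem_filter, Finset.mem_univ, true_and] at hs'
    obtain ⟨s, hs, hΔ, hH⟩ := hs'
    refine ⟨s, hs, (s.1, σ, s'.1) :: wh, by simp [hp], ⟨rfl, hΔ, hv⟩, by simpa using he, ?_⟩
    refine ne_top_of_le_ne_top (WithTop.add_ne_top.2 ⟨hH, hm⟩) ?_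
    rw [mwt_cons]
    exact Finset.inf_le (Finset.mem_univ s'.2)

lemma wtW_snoc_top {q₀ : Q} {w : List A} (σ : A) (h : wtW Δ q₀ w = ⊤) :
    wtW Δ q₀ (w ++ [σ]) = ⊤ := by
  rw [wtW, Finset.inf_eq_top_iff] at h ⊢
  intro r _
  rw [mwt_snoc, Finset.inf_eq_top_iff]
  intro qq _
  rw [h qq (Finset.mem_univ qq), top_add]

lemma zinf_arith3 (k c : ℤ) (W H : ZInf) :
    W + (H + ((c : ℤ) : ZInf)) = W + ((-k : ℤ) : ZInf) + H + ((k + c : ℤ) : ZInf) := by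
  have h0 : ((-k : ℤ) : ZInf) + ((k + c : ℤ) : ZInf) = ((c : ℤ) : ZInf) := by
    rw [← WithTop.coe_add]
    norm_num
  rw [← h0]
  abel

lemma wtA_ne_top_of_valid {q₀ : Q} {wh : List (Q × A × Q)} (hv : Valid Δ q₀ wh) :
    wtW Δ q₀ (proj wh) ≠ ⊤ :=
  ne_top_of_le_ne_top (valid_mwt_ne_top hv) (Finset.inf_le (Finset.mem_univ _))

end Dir2

section Dir2b
variable {Q A P : Type*} [Fintype Q] [DecidableEq Q] [Fintype P]
  (Δ : Q → A → Q → ZInf) (ΔH : P → Q × A × Q → P → ZInf) (q₀ : Q) (d₀ : P)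

/-- From D̂ semantics: every valid baseline has a (unique) surviving D̂ run. -/
lemma survive (hsem : ∀ wh : List (Q × A × Q), wtW ΔH d₀ wh =
      if Valid Δ q₀ wh then wtW Δ q₀ (proj wh) + ((-cst Δ wh : ℤ) : ZInf) else ⊤)
    {wh : List (Q × A × Q)} (hv : Valid Δ q₀ wh) : ∃ d, mwt ΔH wh d₀ d ≠ ⊤ := by
  have h : wtW ΔH d₀ wh ≠ ⊤ := by
    rw [hsem, if_pos hv]
    exact WithTop.add_ne_top.2 ⟨wtA_ne_top_of_valid Δ hv, WithTop.coe_ne_top⟩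
  rw [wtW] at h
  exact inf_ne_top h

lemma mwt_val (hdet : IsDet ΔH)
    (hsem : ∀ wh : List (Q × A × Q), wtW ΔH d₀ wh =
      if Valid Δ q₀ wh then wtW Δ q₀ (proj wh) + ((-cst Δ wh : ℤ) : ZInf) else ⊤)
    {wh : List (Q × A × Q)} {d : P} (hv : Valid Δ q₀ wh) (hm : mwt ΔH wh d₀ d ≠ ⊤) :
    mwt ΔH wh d₀ d = wtW Δ q₀ (proj wh) + ((-cst Δ wh : ℤ) : ZInf) := by
  rw [← det_wtW_eq_mwt hdet hm, hsem, if_pos hv]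

lemma key_step (hdet : IsDet ΔH)
    (hsem : ∀ wh : List (Q × A × Q), wtW ΔH d₀ wh =
      if Valid Δ q₀ wh then wtW Δ q₀ (proj wh) + ((-cst Δ wh : ℤ) : ZInf) else ⊤)
    (w : List A) (σ : A) :
    wtW Δ q₀ w + stepInf Δ ΔH (w.foldl (upd Δ ΔH) {(q₀, d₀)}) σ = wtW Δ q₀ (w ++ [σ]) := by
  -- the value of any finite candidate
  have hval : ∀ s ∈ w.foldl (upd Δ ΔH) {(q₀, d₀)}, ∀ t : Q × P,
      Δ s.1 σ t.1 ≠ ⊤ → ΔH s.2 (s.1, σ, t.1) t.2 ≠ ⊤ →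
      wtW Δ q₀ w + (ΔH s.2 (s.1, σ, t.1) t.2 + Δ s.1 σ t.1) = wtW Δ q₀ (w ++ [σ]) := by
    intro s hs t hΔ hH
    obtain ⟨s0, hs0, wh, hp, hv, hend, hm⟩ := foldl_mem_run Δ ΔH w _ s hs
    rw [Finset.mem_singleton] at hs0
    subst hs0
    have hvw : Valid Δ q₀ (wh ++ [(s.1, σ, t.1)]) :=
      (valid_append Δ q₀ wh _).2 ⟨hv, hend.symm, hΔ, trivial⟩
    have hsnoc : mwt ΔH (wh ++ [(s.1, σ, t.1)]) d₀ t.2 =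
        mwt ΔH wh d₀ s.2 + ΔH s.2 (s.1, σ, t.1) t.2 := by
      rw [mwt_snoc]
      refine inf_eq_of_unique _ s.2 fun e he => ?_
      have : mwt ΔH wh d₀ e = ⊤ := by
        by_contra hc
        exact he (det_mwt_unique hdet wh d₀ e s.2 hc hm)
      rw [this, top_add]
    have hm2 : mwt ΔH (wh ++ [(s.1, σ, t.1)]) d₀ t.2 ≠ ⊤ := by
      rw [hsnoc]
      exact WithTop.add_ne_top.2 ⟨hm, hH⟩
    have e1 := mwt_val Δ ΔH q₀ d₀ hdet hsem hv hm
    have e2 := mwt_val Δ ΔH q₀ d₀ hdet hsem hvw hm2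
    rw [hsnoc, e1] at e2
    rw [hp] at e1 e2
    rw [proj_append, hp, cst_append] at e2
    -- e2 : wtW Δ q₀ w + ↑(-cst wh) + ΔH .. = wtW Δ q₀ (w ++ proj [(s.1,σ,t.1)]) + ↑(-(cst wh + cst [...]))
    have hcst : cst Δ [(s.1, σ, t.1)] = (Δ s.1 σ t.1).untopD 0 := by simp
    rw [hcst] at e2
    rw [← zinf_coe_untop' hΔ]
    rw [zinf_arith3 (cst Δ wh) ((Δ s.1 σ t.1).untopD 0) (wtW Δ q₀ w) (ΔH s.2 (s.1, σ, t.1) t.2)]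
    rw [e2]
    have : ((-(cst Δ wh + (Δ s.1 σ t.1).untopD 0) : ℤ) : ZInf) +
        ((cst Δ wh + (Δ s.1 σ t.1).untopD 0 : ℤ) : ZInf) = 0 := by
      rw [← WithTop.coe_add, neg_add_cancel]
      rfl
    rw [add_assoc, this, add_zero]
    simp [proj]
  by_cases hw : wtW Δ q₀ w = ⊤
  · rw [hw, top_add, wtW_snoc_top Δ σ hw]
  by_cases hwσ : wtW Δ q₀ (w ++ [σ]) = ⊤
  · rw [hwσ]
    have hstep : stepInf Δ ΔH (w.foldl (upd Δ ΔH) {(q₀, d₀)}) σ = ⊤ := by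
      rw [stepInf, Finset.inf_eq_top_iff]
      intro s hs
      rw [Finset.inf_eq_top_iff]
      intro t _
      rw [if_neg]
      rintro ⟨hΔ, hH⟩
      obtain ⟨s0, hs0, wh, hp, hv, hend, hm⟩ := foldl_mem_run Δ ΔH w _ s hs
      rw [Finset.mem_singleton] at hs0
      subst hs0
      have hvw : Valid Δ q₀ (wh ++ [(s.1, σ, t.1)]) :=
        (valid_append Δ q₀ wh _).2 ⟨hv, hend.symm, hΔ, trivial⟩
      have := wtA_ne_top_of_valid Δ hvw
      rw [proj_append, hp] at this
      exact this (by simpa [proj] using hwσ)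
    rw [hstep, add_top]
  · -- find a candidate
    obtain ⟨r, hr⟩ := inf_ne_top (show (Finset.univ.inf fun r => mwt Δ (w ++ [σ]) q₀ r) ≠ ⊤ by
      rwa [← wtW])
    rw [mwt_snoc] at hr
    obtain ⟨qq, hqq⟩ := inf_ne_top hr
    rw [WithTop.add_ne_top] at hqq
    obtain ⟨wh, hp, hv, hend⟩ := mwt_ne_top_exists hqq.1
    obtain ⟨d, hd⟩ := survive Δ ΔH q₀ d₀ hsem hv
    have hmem : (qq, d) ∈ w.foldl (upd Δ ΔH) {(q₀, d₀)} := by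
      have := mem_foldl_of_run Δ ΔH wh {(q₀, d₀)} q₀ d₀ d (Finset.mem_singleton_self _) hv hd
      rwa [hp, hend] at this
    have hvw : Valid Δ q₀ (wh ++ [(qq, σ, r)]) :=
      (valid_append Δ q₀ wh _).2 ⟨hv, hend.symm, hqq.2, trivial⟩
    obtain ⟨d', hd'⟩ := survive Δ ΔH q₀ d₀ hsem hvw
    rw [mwt_snoc] at hd'
    obtain ⟨e, he⟩ := inf_ne_top hd'
    rw [WithTop.add_ne_top] at he
    have hed : e = d := det_mwt_unique hdet wh d₀ e d he.1 hd
    have hH : ΔH d (qq, σ, r) d' ≠ ⊤ := hed ▸ he.2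
    have hstep : stepInf Δ ΔH (w.foldl (upd Δ ΔH) {(q₀, d₀)}) σ =
        ΔH d (qq, σ, r) d' + Δ qq σ r := by
      apply le_antisymm
      · rw [stepInf]
        refine le_trans (Finset.inf_le hmem) ?_
        refine le_trans (Finset.inf_le (Finset.mem_univ ((r, d') : Q × P))) ?_
        rw [if_pos ⟨hqq.2, hH⟩]
      · rw [stepInf]
        refine Finset.le_inf fun s hs => Finset.le_inf fun t _ => ?_
        split_ifs with hc
        · have h1 := hval s hs t hc.1 hc.2
          have h2 := hval (qq, d) hmem (r, d') hqq.2 hH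
          exact le_of_eq (WithTop.add_left_cancel hw (h2.trans h1.symm))
        · exact le_top
    rw [hstep]
    exact hval (qq, d) hmem (r, d') hqq.2 hH

end Dir2b

section Dir2c
variable {Q A P : Type*} [Fintype Q] [DecidableEq Q] [Fintype P]
  (Δ : Q → A → Q → ZInf) (ΔH : P → Q × A × Q → P → ZInf) (q₀ : Q) (d₀ : P)

lemma mainClaim (hdet : IsDet ΔH)
    (hsem : ∀ wh : List (Q × A × Q), wtW ΔH d₀ wh =
      if Valid Δ q₀ wh then wtW Δ q₀ (proj wh) + ((-cst Δ wh : ℤ) : ZInf) else ⊤)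
    (w : List A) :
    mwt (newDelta Δ ΔH) w {(q₀, d₀)} (w.foldl (upd Δ ΔH) {(q₀, d₀)}) = wtW Δ q₀ w ∧
    ∀ S', S' ≠ w.foldl (upd Δ ΔH) {(q₀, d₀)} →
      mwt (newDelta Δ ΔH) w {(q₀, d₀)} S' = ⊤ := by
  induction w using List.reverseRecOn with
  | nil =>
    constructor
    · rw [List.foldl_nil, mwt_nil, if_pos rfl, wtW_nil]
    · intro S' hS'
      rw [List.foldl_nil] at hS'
      rw [mwt_nil, if_neg (Ne.symm hS')]
  | append_singleton w σ ih =>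
    have hG : (w ++ [σ]).foldl (upd Δ ΔH) {(q₀, d₀)} =
        upd Δ ΔH (w.foldl (upd Δ ΔH) {(q₀, d₀)}) σ := by
      rw [List.foldl_append, List.foldl_cons, List.foldl_nil]
    constructor
    · rw [mwt_snoc]
      rw [inf_eq_of_unique _ (w.foldl (upd Δ ΔH) {(q₀, d₀)})
        (fun S hS => by rw [ih.2 S hS, top_add])]
      rw [ih.1, hG, newDelta, if_pos rfl]
      exact key_step Δ ΔH q₀ d₀ hdet hsem w σ
    · intro S' hS'
      rw [mwt_snoc, Finset.inf_eq_top_iff]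
      intro S _
      by_cases hSG : S = w.foldl (upd Δ ΔH) {(q₀, d₀)}
      · subst hSG
        rw [hG] at hS'
        rw [newDelta, if_neg hS', add_top]
      · rw [ih.2 S hSG, top_add]

end Dir2c

section Dir2final
variable {Q A : Type*} [Fintype Q] [DecidableEq Q]

lemma dir2 (Δ : Q → A → Q → ZInf) (q₀ : Q)
    (h : Determinizable (augDelta Δ) (augInit q₀)) : Determinizable Δ q₀ := by
  obtain ⟨P, instP, ΔH, d₀, hdet, heq⟩ := h
  letI := instP
  have hsem : ∀ wh : List (Q × A × Q), wtW ΔH d₀ wh =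
      if Valid Δ q₀ wh then wtW Δ q₀ (proj wh) + ((-cst Δ wh : ℤ) : ZInf) else ⊤ :=
    fun wh => (heq wh).trans (augWt Δ wh (augInit q₀))
  refine determinizable_intro Δ q₀ (newDelta Δ ΔH) {(q₀, d₀)} (newDelta_det Δ ΔH)
    fun w => ?_
  rw [wtW]
  rw [inf_eq_of_unique _ (w.foldl (upd Δ ΔH) {(q₀, d₀)})
    (fun S' hS' => (mainClaim Δ ΔH q₀ d₀ hdet hsem w).2 S' hS')]
  exact (mainClaim Δ ΔH q₀ d₀ hdet hsem w).1

end Dir2final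

/-- **`A` is determinizable iff its baseline-augmented subset construction `Â` is.** -/
theorem determinizable_iff_aug_determinizable {Q A : Type*} [Fintype Q] [DecidableEq Q]
    (Δ : Q → A → Q → ZInf) (q₀ : Q) :
    Determinizable Δ q₀ ↔ Determinizable (augDelta Δ) (augInit q₀) :=
  ⟨dir1 Δ q₀, dir2 Δ q₀⟩
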